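/- arXiv:2211.05513 — 6 statements merged into one kernel-verified Lean document; each statement's English description precedes it below -/
import Mathlib

section
/- Let d ≥ 1 be an integer and set t = ⌈log₂(d+1)⌉. Let m and r be integers with t ≤ r ≤ m. Let D ⊆ F₂^{2^m} be the set of evaluation vectors Eval(x_{m−t+1}·x_{m−t+2}···x_m · g(x₁,…,x_{m−t})), where g ranges over all polynomials in F₂[x₁,…,x_{m−t}] of total degree at most r − t. Then D is an F₂-linear subspace of RM(m,r) of dimension C(m−t, ≤ r−t) = Σ_{i=0}^{r−t} C(m−t, i), and every codeword in D satisfies the (d,∞)-RLL constraint (under the lexicographic coordinate ordering). -/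
/-!
A codeword of `D` is `Eval(g) · Eval(x_{m-t+1} ⋯ x_m)`, and the second factor vanishes at every
index whose last `t` bits are not all `1`. So the support of a codeword lies in one residue class
modulo `2^t ≥ d + 1`, which is the RLL property.

For the dimension: since `a^k = a` on `F₂` for `k ≥ 1`, every monomial of `g` may be replaced by
the product of the variables it involves without changing the codeword, so `D` is already
spanned by the images of the squarefree monomials of degree `≤ r - t` in `x₁, …, x_{m-t}`.
Multiplied by `x_{m-t+1} ⋯ x_m` these stay squarefree, and a nonzero squarefree polynomial does
not vanish on all of `F₂^m`, so these images are linearly independent; there are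
`∑_{i ≤ r-t} C(m-t, i)` of them.
-/

/-- The `m`-bit binary representation (MSB first) of the coordinate index `s`,
as an evaluation point in `F₂^m` (lexicographic coordinate ordering). -/
def bitRepr (m : ℕ) (s : ℕ) : Fin m → ZMod 2 :=
  fun j => if Nat.testBit s (m - 1 - (j : ℕ)) then 1 else 0

/-- Evaluation of an `m`-variate polynomial over `F₂` at all points of `F₂^m`,
listed in lexicographic order, as a linear map. -/
noncomputable def evalRM (m : ℕ) :
    MvPolynomial (Fin m) (ZMod 2) →ₗ[ZMod 2] (Fin (2 ^ m) → ZMod 2) :=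
  LinearMap.pi fun s => (MvPolynomial.aeval (bitRepr m (s : ℕ))).toLinearMap

/-- The Reed-Muller code RM(m,r): evaluation vectors of polynomials of total degree ≤ r. -/
noncomputable def RM (m r : ℕ) : Submodule (ZMod 2) (Fin (2 ^ m) → ZMod 2) :=
  (MvPolynomial.restrictTotalDegree (Fin m) (ZMod 2) r).map (evalRM m)

/-- A word `w` satisfies the `(d,∞)`-RLL constraint: any two 1s are separated by at least d 0s. -/
def RLL (d : ℕ) {n : ℕ} (w : Fin n → ZMod 2) : Prop :=
  ∀ i j : Fin n, w i = 1 → (i : ℕ) < (j : ℕ) → (j : ℕ) ≤ (i : ℕ) + d → w j = 0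

open MvPolynomial Finset
open scoped Pointwise

namespace MvPolynomial

variable {σ R : Type*} [CommSemiring R]

noncomputable def indicatorExp (T : Finset σ) : σ →₀ ℕ := Finsupp.indicator T fun _ _ => 1

theorem indicatorExp_apply [DecidableEq σ] (T : Finset σ) (i : σ) :
    indicatorExp T i = if i ∈ T then 1 else 0 := by
  simp [indicatorExp, Finsupp.indicator_apply]

@[simp]
theorem support_indicatorExp (T : Finset σ) : (indicatorExp T).support = T := by
  classical
  ext i
  by_cases h : i ∈ T <;> simp [indicatorExp_apply, h]

theorem indicatorExp_injective : Function.Injective (indicatorExp (σ := σ)) := fun S T h => by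
  simpa using congrArg Finsupp.support h

@[simp]
theorem degree_indicatorExp (T : Finset σ) : (indicatorExp T).degree = #T := by
  classical
  rw [Finsupp.degree_apply, support_indicatorExp, card_eq_sum_ones]
  exact sum_congr rfl fun i hi => by simp [indicatorExp_apply, hi]

theorem prod_X_eq_monomial_indicatorExp (T : Finset σ) :
    ∏ i ∈ T, (X i : MvPolynomial σ R) = monomial (indicatorExp T) 1 := by
  have h := prod_X_pow (R := R) (fun _ => 1) T
  simp only [pow_one] at h
  exact h

def lowDegreeExps (S : Finset σ) (k : ℕ) : Set (σ →₀ ℕ) :=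
  {n | n.degree ≤ k ∧ n.support ⊆ S}

noncomputable def squarefreeExps (S : Finset σ) (k : ℕ) : Finset (σ →₀ ℕ) :=
  {T ∈ S.powerset | #T ≤ k}.map ⟨indicatorExp, indicatorExp_injective⟩

theorem mem_restrictSupport_lowDegreeExps {S : Finset σ} {k : ℕ} {p : MvPolynomial σ R} :
    p ∈ restrictSupport R (lowDegreeExps S k) ↔ p.totalDegree ≤ k ∧ p.vars ⊆ S := by
  simp only [mem_restrictSupport_iff, Set.subset_def, lowDegreeExps, Set.mem_ofPred_eq,
    totalDegree, Finset.sup_le_iff, subset_iff, mem_vars_iff_mem_support, mem_coe]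
  constructor
  · intro h
    exact ⟨fun n hn => h n hn |>.1, fun i ⟨n, hn, hi⟩ => (h n hn).2 hi⟩
  · intro h n hn
    exact ⟨h.1 n hn, fun i hi => h.2 ⟨n, hn, hi⟩⟩

theorem card_powerset_filter_card_le {α : Type*} (S : Finset α) (k : ℕ) :
    #{T ∈ S.powerset | #T ≤ k} = ∑ i ∈ range (k + 1), (#S).choose i := by
  rw [card_eq_sum_card_fiberwise (f := card) (t := range (k + 1))]
  · refine sum_congr rfl fun i hi => ?_
    rw [filter_filter, ← card_powersetCard, powersetCard_eq_filter]
    congr 1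
    refine filter_congr fun T _ => ?_
    simp only [mem_range] at hi
    omega
  · intro T hT
    simp only [coe_filter, Set.mem_ofPred_eq, coe_range, Set.mem_Iio] at hT ⊢
    omega

theorem card_squarefreeExps (S : Finset σ) (k : ℕ) :
    #(squarefreeExps S k) = ∑ i ∈ range (k + 1), (#S).choose i := by
  rw [squarefreeExps, card_map, card_powerset_filter_card_le]

theorem squarefreeExps_subset_lowDegreeExps (S : Finset σ) (k : ℕ) :
    ↑(squarefreeExps S k) ⊆ lowDegreeExps S k := by
  intro n hn
  obtain ⟨T, hT, rfl⟩ := mem_map.mp hn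
  simp only [mem_filter, mem_powerset] at hT
  simpa [lowDegreeExps] using hT.symm

theorem indicatorExp_support_mem_squarefreeExps {S : Finset σ} {k : ℕ} {n : σ →₀ ℕ}
    (hn : n ∈ lowDegreeExps S k) : indicatorExp n.support ∈ squarefreeExps S k := by
  refine mem_map.mpr ⟨n.support, mem_filter.mpr ⟨mem_powerset.mpr hn.2, ?_⟩, rfl⟩
  calc #n.support = ∑ i ∈ n.support, 1 := card_eq_sum_ones _
    _ ≤ ∑ i ∈ n.support, n i :=
      sum_le_sum fun i hi => Nat.one_le_iff_ne_zero.mpr (Finsupp.mem_support_iff.mp hi)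
    _ ≤ k := hn.1

theorem mul_prod_X_mem_restrictSupport {s : Set (σ →₀ ℕ)} {p : MvPolynomial σ R}
    (hp : p ∈ restrictSupport R s) (F : Finset σ) :
    p * ∏ i ∈ F, X i ∈ restrictSupport R (s + {indicatorExp F}) := by
  rw [restrictSupport_add, prod_X_eq_monomial_indicatorExp]
  exact Submodule.mul_mem_mul hp ((monomial_mem_restrictSupport R).mpr (.inl rfl))

theorem mul_prod_X_mem_restrictTotalDegree {S : Finset σ} {k : ℕ} {p : MvPolynomial σ R}
    (hp : p ∈ restrictSupport R (lowDegreeExps S k)) (F : Finset σ) :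
    p * ∏ i ∈ F, X i ∈ restrictTotalDegree σ R (k + #F) := by
  refine restrictSupport_mono R ?_ (mul_prod_X_mem_restrictSupport hp F)
  rintro _ ⟨n, hn, _, rfl, rfl⟩
  change (n + indicatorExp F).degree ≤ k + #F
  rw [map_add, degree_indicatorExp]
  exact Nat.add_le_add_right hn.1 _

theorem mul_prod_X_mem_restrictDegree {S F : Finset σ} (hSF : Disjoint S F) {k : ℕ}
    {p : MvPolynomial σ R} (hp : p ∈ restrictSupport R ↑(squarefreeExps S k)) :
    p * ∏ i ∈ F, X i ∈ restrictDegree σ R 1 := by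
  classical
  refine restrictSupport_mono R ?_ (mul_prod_X_mem_restrictSupport hp F)
  rintro _ ⟨_, hn, _, rfl, rfl⟩ i
  obtain ⟨T, hT, rfl⟩ := mem_map.mp hn
  have hTS : T ⊆ S := mem_powerset.mp (mem_filter.mp hT).1
  have hTF : i ∈ T → i ∉ F := fun hi => disjoint_left.mp (hSF.mono_left hTS) hi
  change (indicatorExp T + indicatorExp F) i ≤ 1
  simp only [Finsupp.add_apply, indicatorExp_apply]
  split_ifs <;> simp_all

theorem eval_monomial_indicatorExp_support (x : σ → ZMod 2) (n : σ →₀ ℕ) (a : ZMod 2) :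
    eval x (monomial (indicatorExp n.support) a) = eval x (monomial n a) := by
  classical
  have hidem : ∀ b : ZMod 2, IsIdempotentElem b := fun b => by fin_cases b <;> rfl
  simp only [eval_monomial, Finsupp.prod, support_indicatorExp]
  congr 1
  refine prod_congr rfl fun i hi => ?_
  rw [indicatorExp_apply, if_pos hi, pow_one, (hidem _).pow_eq (Finsupp.mem_support_iff.mp hi)]

end MvPolynomial

theorem bitRepr_injective (m : ℕ) : Function.Injective fun s : Fin (2 ^ m) => bitRepr m s := by
  intro s s' h
  refine Fin.ext (Nat.eq_of_testBit_eq fun k => ?_)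
  by_cases hk : k < m
  · have hbit := congrFun h ⟨m - 1 - k, by omega⟩
    simp only [bitRepr, Nat.sub_sub_self (by omega : k ≤ m - 1)] at hbit
    revert hbit
    cases (s : ℕ).testBit k <;> cases (s' : ℕ).testBit k <;> simp
  · have hm : 2 ^ m ≤ 2 ^ k := Nat.pow_le_pow_right two_pos (by omega)
    rw [Nat.testBit_lt_two_pow (s.2.trans_le hm), Nat.testBit_lt_two_pow (s'.2.trans_le hm)]

theorem bitRepr_surjective (m : ℕ) : Function.Surjective fun s : Fin (2 ^ m) => bitRepr m s :=
  ((Fintype.bijective_iff_injective_and_card _).mpr ⟨bitRepr_injective m, by simp⟩).2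

theorem evalRM_apply {m : ℕ} (p : MvPolynomial (Fin m) (ZMod 2)) (s : Fin (2 ^ m)) :
    evalRM m p s = eval (bitRepr m s) p := by
  simp [evalRM]

theorem evalRM_mul {m : ℕ} (p q : MvPolynomial (Fin m) (ZMod 2)) :
    evalRM m (p * q) = evalRM m p * evalRM m q := by
  funext s
  simp [evalRM_apply]

theorem evalRM_monomial_indicatorExp_support {m : ℕ} (n : Fin m →₀ ℕ) (a : ZMod 2) :
    evalRM m (monomial (indicatorExp n.support) a) = evalRM m (monomial n a) := by
  funext s
  simp only [evalRM_apply, eval_monomial_indicatorExp_support]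

theorem eq_zero_of_evalRM_eq_zero {m : ℕ} {p : MvPolynomial (Fin m) (ZMod 2)}
    (hp : p ∈ restrictDegree (Fin m) (ZMod 2) 1) (h : evalRM m p = 0) : p = 0 := by
  refine eq_zero_of_eval_eq_zero (Fin m) (ZMod 2) p (fun v => ?_) (by simpa [ZMod.card] using hp)
  obtain ⟨s, rfl⟩ := bitRepr_surjective m v
  simpa [evalRM_apply] using congrFun h s

theorem RLL_of_forall_mod_eq {d N a n : ℕ} (hdN : d < N) {w : Fin n → ZMod 2}
    (hw : ∀ i, w i ≠ 0 → (i : ℕ) % N = a) : RLL d w := by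
  intro i j hi hij hjd
  by_contra hj
  have hdvd : N ∣ (j : ℕ) - i :=
    (Nat.modEq_iff_dvd' hij.le).mp ((hw i (by simp [hi])).trans (hw j hj).symm)
  have := Nat.le_of_dvd (by omega) hdvd
  omega

-- With 0-based indices, `lowVars` are `x₁, …, x_{m-t}` and `highVars` are `x_{m-t+1}, …, x_m`.
def lowVars (m t : ℕ) : Finset (Fin m) := univ.filter fun j : Fin m => (j : ℕ) < m - t

def highVars (m t : ℕ) : Finset (Fin m) := univ.filter fun j : Fin m => m - t ≤ (j : ℕ)

theorem card_lowVars (m t : ℕ) : #(lowVars m t) = m - t := by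
  rw [lowVars, Fin.card_filter_val_lt]
  omega

theorem card_highVars_le (m t : ℕ) : #(highVars m t) ≤ t := by
  have h := card_filter_add_card_filter_not (s := univ) fun j : Fin m => (j : ℕ) < m - t
  simp only [not_lt, card_univ, Fintype.card_fin] at h
  rw [← lowVars, ← highVars, card_lowVars] at h
  omega

theorem disjoint_lowVars_highVars (m t : ℕ) : Disjoint (lowVars m t) (highVars m t) := by
  simp only [lowVars, highVars, disjoint_filter]
  omega

noncomputable def rllEncode (m t : ℕ) :
    MvPolynomial (Fin m) (ZMod 2) →ₗ[ZMod 2] (Fin (2 ^ m) → ZMod 2) :=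
  evalRM m ∘ₗ LinearMap.mulRight (ZMod 2) (∏ j ∈ highVars m t, X j)

theorem rllEncode_apply {m t : ℕ} (p : MvPolynomial (Fin m) (ZMod 2)) :
    rllEncode m t p = evalRM m (p * ∏ j ∈ highVars m t, X j) := rfl

noncomputable def rllCode (m t k : ℕ) : Submodule (ZMod 2) (Fin (2 ^ m) → ZMod 2) :=
  (restrictSupport (ZMod 2) (lowDegreeExps (lowVars m t) k)).map (rllEncode m t)

theorem rllCode_eq_map_squarefreeExps (m t k : ℕ) :
    rllCode m t k =
      (restrictSupport (ZMod 2) ↑(squarefreeExps (lowVars m t) k)).map (rllEncode m t) := by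
  refine le_antisymm ?_ (Submodule.map_mono (restrictSupport_mono _
    (squarefreeExps_subset_lowDegreeExps _ _)))
  rw [rllCode, restrictSupport_eq_span, Submodule.map_span_le]
  rintro _ ⟨n, hn, rfl⟩
  refine ⟨monomial (indicatorExp n.support) 1,
    (monomial_mem_restrictSupport _).mpr (.inl (indicatorExp_support_mem_squarefreeExps hn)), ?_⟩
  rw [rllEncode_apply, rllEncode_apply, evalRM_mul, evalRM_mul,
    evalRM_monomial_indicatorExp_support]

theorem injective_rllEncode_domRestrict (m t k : ℕ) :
    Function.Injective ((rllEncode m t).domRestrict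
      (restrictSupport (ZMod 2) ↑(squarefreeExps (lowVars m t) k))) := by
  refine LinearMap.ker_eq_bot.mp (LinearMap.ker_eq_bot'.mpr fun p hp => Subtype.ext ?_)
  have hsqfree := mul_prod_X_mem_restrictDegree (disjoint_lowVars_highVars m t) p.2
  have hprod : ∏ j ∈ highVars m t, (X j : MvPolynomial (Fin m) (ZMod 2)) ≠ 0 :=
    prod_ne_zero_iff.mpr fun j _ => X_ne_zero j
  exact (mul_eq_zero.mp (eq_zero_of_evalRM_eq_zero hsqfree hp)).resolve_right hprod

theorem finrank_rllCode (m t k : ℕ) :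
    Module.finrank (ZMod 2) (rllCode m t k) = ∑ i ∈ range (k + 1), (m - t).choose i := by
  rw [rllCode_eq_map_squarefreeExps, ← LinearMap.range_domRestrict,
    LinearMap.finrank_range_of_inj (injective_rllEncode_domRestrict m t k),
    Module.finrank_eq_nat_card_basis (basisRestrictSupport _ _), Nat.card_coe_set_eq,
    Set.ncard_coe_finset, card_squarefreeExps, card_lowVars]

theorem rllCode_le_RM {m t r : ℕ} (htr : t ≤ r) : rllCode m t (r - t) ≤ RM m r := by
  rintro _ ⟨p, hp, rfl⟩
  have hdeg := mul_prod_X_mem_restrictTotalDegree hp (highVars m t)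
  rw [mem_restrictTotalDegree] at hdeg
  refine ⟨_, (mem_restrictTotalDegree _ _ _).mpr (hdeg.trans ?_), (rllEncode_apply p).symm⟩
  have := card_highVars_le m t
  omega

theorem mod_two_pow_eq_of_rllEncode_ne_zero {m t : ℕ} (htm : t ≤ m)
    {p : MvPolynomial (Fin m) (ZMod 2)} {s : Fin (2 ^ m)} (hs : rllEncode m t p s ≠ 0) :
    (s : ℕ) % 2 ^ t = 2 ^ t - 1 := by
  rw [rllEncode_apply, evalRM_apply, eval_mul, eval_prod] at hs
  have hbits : ∀ k < t, (s : ℕ).testBit k := fun k hk => by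
    have hbit := prod_ne_zero_iff.mp (right_ne_zero_of_mul hs) ⟨m - 1 - k, by omega⟩
      (by simp only [highVars, mem_filter, mem_univ, true_and]; omega)
    simpa [bitRepr, Nat.sub_sub_self (by omega : k ≤ m - 1)] using hbit
  refine Nat.eq_of_testBit_eq fun k => ?_
  rw [Nat.testBit_mod_two_pow, Nat.testBit_two_pow_sub_one]
  by_cases hk : k < t <;> simp [hk, hbits]

theorem RLL_of_mem_rllCode {d m t k : ℕ} (hd : d < 2 ^ t) (htm : t ≤ m)
    {c : Fin (2 ^ m) → ZMod 2} (hc : c ∈ rllCode m t k) : RLL d c := by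
  obtain ⟨p, -, rfl⟩ := hc
  exact RLL_of_forall_mod_eq hd fun s hs => mod_two_pow_eq_of_rllEncode_ne_zero htm hs

theorem stmt0_general (d t m r : ℕ) (ht : t = Nat.clog 2 (d + 1))
    (htr : t ≤ r) (hrm : r ≤ m) :
    ∃ D : Submodule (ZMod 2) (Fin (2 ^ m) → ZMod 2),
      (D : Set (Fin (2 ^ m) → ZMod 2)) =
        {c | ∃ g : MvPolynomial (Fin m) (ZMod 2),
              g.totalDegree ≤ r - t ∧
              (∀ j ∈ g.vars, (j : ℕ) < m - t) ∧
              c = evalRM m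
                (g * ∏ j ∈ Finset.univ.filter (fun j : Fin m => m - t ≤ (j : ℕ)),
                  MvPolynomial.X j)} ∧
      D ≤ RM m r ∧
      Module.finrank (ZMod 2) D = ∑ i ∈ Finset.range (r - t + 1), (m - t).choose i ∧
      ∀ c ∈ D, RLL d c := by
  have hd : d < 2 ^ t := ht ▸ Nat.le_pow_clog one_lt_two (d + 1)
  refine ⟨rllCode m t (r - t), ?_, rllCode_le_RM htr, finrank_rllCode m t (r - t),
    fun c hc => RLL_of_mem_rllCode hd (htr.trans hrm) hc⟩
  ext c
  simp only [rllCode, SetLike.mem_coe, Submodule.mem_map, mem_restrictSupport_lowDegreeExps,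
    Set.mem_ofPred_eq, rllEncode_apply, highVars, lowVars, subset_iff, mem_filter, mem_univ,
    true_and, and_assoc, eq_comm]

/-- For d ≥ 1, t = ⌈log₂(d+1)⌉, t ≤ r ≤ m, the set D of evaluation vectors
Eval(x_{m-t+1}···x_m · g(x₁,…,x_{m-t})), g of total degree ≤ r−t in the first m−t variables,
is a linear subspace of RM(m,r) of dimension Σ_{i=0}^{r−t} C(m−t,i), all of whose codewords
satisfy the (d,∞)-RLL constraint (lexicographic coordinate ordering). -/
theorem stmt0 (d t m r : ℕ) (hd : 1 ≤ d) (ht : t = Nat.clog 2 (d + 1))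
    (htr : t ≤ r) (hrm : r ≤ m) :
    ∃ D : Submodule (ZMod 2) (Fin (2 ^ m) → ZMod 2),
      (D : Set (Fin (2 ^ m) → ZMod 2)) =
        {c | ∃ g : MvPolynomial (Fin m) (ZMod 2),
              g.totalDegree ≤ r - t ∧
              (∀ j ∈ g.vars, (j : ℕ) < m - t) ∧
              c = evalRM m
                (g * ∏ j ∈ Finset.univ.filter (fun j : Fin m => m - t ≤ (j : ℕ)),
                  MvPolynomial.X j)} ∧
      D ≤ RM m r ∧
      Module.finrank (ZMod 2) D = ∑ i ∈ Finset.range (r - t + 1), (m - t).choose i ∧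
      ∀ c ∈ D, RLL d c :=
  stmt0_general d t m r ht htr hrm
end

section
/- Fix R ∈ (0,1), an integer d ≥ 1, a sequence (r_m)_{m≥1} of nonnegative integers with lim_{m→∞} C(m, ≤ r_m)/2^m = R, and a sequence of Gray permutations (π_m)_{m≥1}. For each m, let L_m denote the maximum dimension of an F₂-linear subspace D of RM(m, r_m) such that for every c = (c_0,…,c_{2^m−1}) ∈ D, the permuted word (c_{π_m(0)}, c_{π_m(1)}, …, c_{π_m(2^m−1)}) satisfies the (d,∞)-RLL constraint. Then limsup_{m→∞} L_m/2^m ≤ R/(d+1). -/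
/-- A Gray permutation of {0,…,2^m−1}: the m-bit binary representations of consecutive
values π(j−1), π(j) differ in exactly one bit position. -/
def IsGray (m : ℕ) (π : Equiv.Perm (Fin (2 ^ m))) : Prop :=
  ∀ j : Fin (2 ^ m), ∀ h : (j : ℕ) + 1 < 2 ^ m,
    ((Finset.range m).filter fun i =>
      Nat.testBit ((π j : Fin (2 ^ m)) : ℕ) i ≠
        Nat.testBit ((π (⟨(j : ℕ) + 1, h⟩ : Fin (2 ^ m)) : Fin (2 ^ m)) : ℕ) i).card = 1

/-!
If every word of a linear code `D`, read in the order `π`, has its 1s more than `d` apart, then so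
does the union of their supports: a word with a 1 at `i` and a word with a 1 at `j` close to `i`
could be added to produce a word violating the constraint. Hence `D` vanishes outside a set `P`
of at most `2^m/(d+1) + 1` coordinates, i.e. it lies in the code obtained from `RM(m,r)` by
shortening on the complement of `P`.

For a code `C` of length `N` with a transitive automorphism group (for `RM(m,r)`: the translations
of `F₂^m`), `Q ↦ |Q| dim C + N dim (C shortened on Q)` is supermodular and invariant, so it is
maximal at `∅` or at the full index set, where it equals `N dim C`. This gives
`dim (C shortened on Pᶜ) ≤ |P| dim C / N`. Together with `dim RM(m,r) ≤ C(m, ≤ r)`, the rate is at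
most `(1/(d+1) + 2^{-m}) C(m, ≤ r)/2^m`, which tends to `R/(d+1)`.
-/

open Finset Module

section Submodular

variable {ι β : Type*} [Fintype ι] [DecidableEq ι]
  [AddCommMonoid β] [LinearOrder β] [IsOrderedCancelAddMonoid β]

theorem le_max_of_supermodular_of_transitive (f : Finset ι → β)
    (hf : ∀ A B, f A + f B ≤ f (A ∪ B) + f (A ∩ B))
    (htrans : ∀ i j, ∃ σ : Equiv.Perm ι, σ i = j ∧ ∀ Q, f (Q.image σ) = f Q) (Q : Finset ι) :
    f Q ≤ max (f ∅) (f univ) := by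
  -- The maximizers are closed under `∪`, so their union `U` is one; invariance makes `U` either
  -- empty or everything.
  obtain ⟨Q₀, -, hQ₀⟩ := exists_max_image (univ : Finset (Finset ι)) f univ_nonempty
  have hmax : ∀ Q, f Q ≤ f Q₀ := fun Q => hQ₀ Q (mem_univ Q)
  have hclosed : SupClosed {Q | f Q = f Q₀} := by
    intro A hA B hB
    by_contra hne
    have hlt : f (A ∪ B) < f Q₀ := lt_of_le_of_ne (hmax _) hne
    have := hf A B
    rw [hA, hB] at this
    exact (add_lt_add_of_lt_of_le hlt (hmax _)).not_ge this
  set U := (univ.filter fun Q => f Q = f Q₀).sup id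
  have hU : f U = f Q₀ :=
    hclosed.finsetSup_mem ⟨Q₀, by simp⟩ fun Q hQ => (mem_filter.mp hQ).2
  have hsubU : ∀ Q, f Q = f Q₀ → Q ⊆ U := fun Q hQ =>
    le_sup (f := id) (mem_filter.mpr ⟨mem_univ Q, hQ⟩)
  have hQ := hmax Q
  rcases U.eq_empty_or_nonempty with hemp | ⟨i₀, hi₀⟩
  · rw [← hU, hemp] at hQ
    exact le_max_of_le_left hQ
  · suffices U = univ by rw [← hU, this] at hQ; exact le_max_of_le_right hQ
    refine eq_univ_of_forall fun j => ?_
    obtain ⟨σ, rfl, hσ⟩ := htrans i₀ j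
    exact hsubU _ ((hσ U).trans hU) (mem_image_of_mem σ hi₀)

end Submodular

section Shortening

variable {F ι : Type*} [Field F]

-- The shortened code, except that the coordinates in `Q` are kept (as zeros) rather than deleted.
def Submodule.shortened (C : Submodule F (ι → F)) (Q : Finset ι) : Submodule F (ι → F) :=
  C ⊓ Submodule.pi (Q : Set ι) fun _ => ⊥

namespace Submodule

variable (C : Submodule F (ι → F))

theorem mem_shortened {Q : Finset ι} {c : ι → F} :
    c ∈ C.shortened Q ↔ c ∈ C ∧ ∀ i ∈ Q, c i = 0 := by
  simp [shortened, mem_pi]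

@[simp]
theorem shortened_empty : C.shortened ∅ = C := by
  simp [shortened, pi_empty]

@[simp]
theorem shortened_univ [Fintype ι] : C.shortened univ = ⊥ := by
  simp [shortened, pi_univ_bot]

theorem shortened_anti {A B : Finset ι} (h : A ⊆ B) : C.shortened B ≤ C.shortened A :=
  fun _ hc => ⟨hc.1, fun i hi => hc.2 i (h hi)⟩

variable [DecidableEq ι]

theorem shortened_union (A B : Finset ι) :
    C.shortened (A ∪ B) = C.shortened A ⊓ C.shortened B := by
  ext c
  simp only [mem_inf, mem_shortened, mem_union]
  grind

theorem finrank_shortened_image {σ : Equiv.Perm ι} (hσ : ∀ c, c ∈ C ↔ c ∘ σ ∈ C)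
    (Q : Finset ι) : finrank F (C.shortened (Q.image σ)) = finrank F (C.shortened Q) := by
  have : C.shortened (Q.image σ) =
      (C.shortened Q).comap (LinearEquiv.funCongrLeft F F σ : (ι → F) →ₗ[F] ι → F) := by
    ext c
    simp only [mem_comap, LinearEquiv.coe_coe, LinearEquiv.funCongrLeft_apply, mem_shortened,
      hσ c, forall_mem_image]
    rfl
  rw [this, comap_equiv_eq_map_symm, LinearEquiv.finrank_map_eq]

variable [Fintype ι]

theorem finrank_shortened_supermodular (A B : Finset ι) :
    finrank F (C.shortened A) + finrank F (C.shortened B) ≤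
      finrank F (C.shortened (A ∪ B)) + finrank F (C.shortened (A ∩ B)) := by
  rw [← finrank_sup_add_finrank_inf_eq, shortened_union, add_comm]
  exact add_le_add_right (finrank_mono <|
    sup_le (C.shortened_anti inter_subset_left) (C.shortened_anti inter_subset_right)) _

theorem card_mul_finrank_shortened_le
    (htrans : ∀ i j, ∃ σ : Equiv.Perm ι, σ i = j ∧ ∀ c, c ∈ C ↔ c ∘ σ ∈ C) (Q : Finset ι) :
    Fintype.card ι * finrank F (C.shortened Q) ≤ Qᶜ.card * finrank F C := by
  let f : Finset ι → ℕ := fun Q => Q.card * finrank F C + Fintype.card ι * finrank F (C.shortened Q)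
  have hf : ∀ A B, f A + f B ≤ f (A ∪ B) + f (A ∩ B) := fun A B => by
    have := C.finrank_shortened_supermodular A B
    have := card_union_add_card_inter A B
    simp only [f]
    nlinarith
  have hinv : ∀ i j, ∃ σ : Equiv.Perm ι, σ i = j ∧ ∀ Q, f (Q.image σ) = f Q := fun i j => by
    obtain ⟨σ, hij, hσ⟩ := htrans i j
    exact ⟨σ, hij, fun Q => by
      simp only [f, card_image_of_injective Q σ.injective, C.finrank_shortened_image hσ]⟩
  have hmax := le_max_of_supermodular_of_transitive f hf hinv Q
  simp only [f, card_empty, card_univ] at hmax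
  rw [shortened_empty, shortened_univ, finrank_bot, zero_mul, zero_add, mul_zero, add_zero,
    max_self] at hmax
  have := card_add_card_compl Q
  nlinarith

end Submodule

end Shortening

section ReedMuller

open MvPolynomial

lemma ZMod.two_pow_eq_self (x : ZMod 2) {k : ℕ} (hk : k ≠ 0) : x ^ k = x := by
  obtain ⟨k, rfl⟩ := Nat.exists_eq_succ_of_ne_zero hk
  exact IsIdempotentElem.pow_succ_eq k (by simpa [IsIdempotentElem, sq] using ZMod.pow_card x)

noncomputable def sqfreeEval (m : ℕ) (T : Finset (Fin m)) : Fin (2 ^ m) → ZMod 2 :=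
  evalRM m (∏ i ∈ T, X i)

lemma sqfreeEval_apply (m : ℕ) (T : Finset (Fin m)) (s : Fin (2 ^ m)) :
    sqfreeEval m T s = ∏ i ∈ T, bitRepr m s i := by
  simp [sqfreeEval, evalRM]

lemma evalRM_monomial_one (m : ℕ) (v : Fin m →₀ ℕ) :
    evalRM m (monomial v 1) = sqfreeEval m v.support := by
  funext s
  rw [sqfreeEval_apply]
  simp only [evalRM, LinearMap.pi_apply, AlgHom.toLinearMap_apply, aeval_monomial, map_one,
    one_mul, Finsupp.prod]
  exact prod_congr rfl fun i hi => ZMod.two_pow_eq_self _ (Finsupp.mem_support_iff.mp hi)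

lemma totalDegree_prod_X_le {m : ℕ} (T : Finset (Fin m)) :
    (∏ i ∈ T, X i : MvPolynomial (Fin m) (ZMod 2)).totalDegree ≤ T.card :=
  (totalDegree_finsetProd _ _).trans (by simp [totalDegree_X])

lemma RM_eq_span (m r : ℕ) :
    RM m r = Submodule.span (ZMod 2)
      (((univ.filter fun T : Finset (Fin m) => T.card ≤ r).image (sqfreeEval m) : Finset _) :
        Set (Fin (2 ^ m) → ZMod 2)) := by
  apply le_antisymm
  · rintro _ ⟨f, hf, rfl⟩
    rw [SetLike.mem_coe, mem_restrictTotalDegree] at hf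
    rw [f.as_sum, map_sum]
    refine Submodule.sum_mem _ fun v hv => ?_
    rw [← mul_one (coeff v f), ← smul_eq_mul, ← smul_monomial, map_smul, evalRM_monomial_one]
    refine Submodule.smul_mem _ _ (Submodule.subset_span ?_)
    simp only [coe_image, coe_filter, mem_univ, true_and, Set.mem_image, Set.mem_ofPred_eq]
    refine ⟨v.support, ?_, rfl⟩
    calc v.support.card ≤ v.sum fun _ e => e := by
          simpa [Finsupp.sum] using card_nsmul_le_sum v.support v 1 fun i hi =>
            Nat.one_le_iff_ne_zero.2 (Finsupp.mem_support_iff.1 hi)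
      _ ≤ f.totalDegree := le_totalDegree hv
      _ ≤ r := hf
  · rw [Submodule.span_le]
    simp only [coe_image, coe_filter, mem_univ, true_and, Set.image_subset_iff]
    intro T hT
    exact ⟨_, (mem_restrictTotalDegree _ _ _).2 ((totalDegree_prod_X_le T).trans hT), rfl⟩

lemma card_filter_card_le (m r : ℕ) :
    (univ.filter fun T : Finset (Fin m) => T.card ≤ r).card ≤
      ∑ i ∈ range (r + 1), m.choose i := by
  rw [card_eq_sum_card_fiberwise (f := card) (t := range (r + 1))
    (fun T hT => mem_range.2 (Nat.lt_succ_of_le (mem_filter.1 hT).2))]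
  refine sum_le_sum fun i _ => ?_
  calc _ ≤ (powersetCard i (univ : Finset (Fin m))).card :=
        card_le_card fun T hT => by simpa using (mem_filter.1 hT).2
    _ = m.choose i := by simp

lemma finrank_RM_le (m r : ℕ) :
    finrank (ZMod 2) (RM m r) ≤ ∑ i ∈ range (r + 1), m.choose i := by
  rw [RM_eq_span]
  exact (finrank_span_finset_le_card _).trans (card_image_le.trans (card_filter_card_le m r))

end ReedMuller

lemma bitRepr_xor (m s t : ℕ) : bitRepr m (s ^^^ t) = bitRepr m s + bitRepr m t := by
  funext j
  simp only [bitRepr, Nat.testBit_xor, Pi.add_apply]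
  cases s.testBit (m - 1 - j) <;> cases t.testBit (m - 1 - j) <;> decide

def xorPerm (m : ℕ) (t : Fin (2 ^ m)) : Equiv.Perm (Fin (2 ^ m)) :=
  Function.Involutive.toPerm (fun s => ⟨s ^^^ t, Nat.xor_lt_two_pow s.isLt t.isLt⟩)
    fun s => Fin.ext (by simp)

lemma xorPerm_apply_val (m : ℕ) (t s : Fin (2 ^ m)) : (xorPerm m t s : ℕ) = s ^^^ t := rfl

lemma xorPerm_xorPerm (m : ℕ) (t s : Fin (2 ^ m)) : xorPerm m t (xorPerm m t s) = s :=
  Function.Involutive.toPerm_involutive _ s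

lemma sqfreeEval_comp_xorPerm (m : ℕ) (t : Fin (2 ^ m)) (T : Finset (Fin m)) :
    sqfreeEval m T ∘ xorPerm m t =
      ∑ U ∈ T.powerset, (∏ i ∈ T \ U, bitRepr m t i) • sqfreeEval m U := by
  funext s
  simp only [Function.comp_apply, sqfreeEval_apply, xorPerm_apply_val, bitRepr_xor, Pi.add_apply,
    prod_add, Finset.sum_apply, Pi.smul_apply, smul_eq_mul, mul_comm]

lemma comp_xorPerm_mem_RM {m r : ℕ} (t : Fin (2 ^ m)) {c : Fin (2 ^ m) → ZMod 2}
    (hc : c ∈ RM m r) : c ∘ xorPerm m t ∈ RM m r := by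
  rw [RM_eq_span] at hc
  induction hc using Submodule.span_induction with
  | mem x hx =>
    simp only [coe_image, coe_filter, mem_univ, true_and, Set.mem_image, Set.mem_ofPred_eq] at hx
    obtain ⟨T, hT, rfl⟩ := hx
    rw [sqfreeEval_comp_xorPerm, RM_eq_span]
    refine Submodule.sum_mem _ fun U hU => Submodule.smul_mem _ _ (Submodule.subset_span ?_)
    exact mem_coe.2 (mem_image_of_mem _
      (mem_filter.2 ⟨mem_univ U, (card_le_card (mem_powerset.1 hU)).trans hT⟩))
  | zero => exact zero_mem _
  | add x y _ _ hx hy => exact add_mem hx hy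
  | smul a x _ hx => exact Submodule.smul_mem _ a hx

lemma RM_transitive (m r : ℕ) (i j : Fin (2 ^ m)) :
    ∃ σ : Equiv.Perm (Fin (2 ^ m)), σ i = j ∧ ∀ c, c ∈ RM m r ↔ c ∘ σ ∈ RM m r := by
  let t : Fin (2 ^ m) := ⟨i ^^^ j, Nat.xor_lt_two_pow i.isLt j.isLt⟩
  refine ⟨xorPerm m t, Fin.ext (by simp [t, xorPerm_apply_val]),
    fun c => ⟨comp_xorPerm_mem_RM t, fun hc => ?_⟩⟩
  simpa [Function.comp_def, xorPerm_xorPerm] using comp_xorPerm_mem_RM t hc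

section Support

variable {F ι : Type*} [Field F] [Fintype ι]

open Classical in
noncomputable def Submodule.codeSupport (D : Submodule F (ι → F)) : Finset ι :=
  univ.filter fun i => ∃ c ∈ D, c i ≠ 0

namespace Submodule

variable {D : Submodule F (ι → F)}

theorem mem_codeSupport {i : ι} : i ∈ D.codeSupport ↔ ∃ c ∈ D, c i ≠ 0 := by
  classical
  simp [codeSupport]

theorem le_shortened_compl_codeSupport [DecidableEq ι] {C : Submodule F (ι → F)} (hD : D ≤ C) :
    D ≤ C.shortened D.codeSupportᶜ := by
  refine fun c hc => C.mem_shortened.2 ⟨hD hc, fun i hi => ?_⟩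
  by_contra hci
  exact mem_compl.1 hi (mem_codeSupport.2 ⟨c, hc, hci⟩)

theorem codeSupport_map_funLeft [DecidableEq ι] (σ : Equiv.Perm ι) :
    (D.map (LinearMap.funLeft F F σ)).codeSupport = D.codeSupport.image σ.symm := by
  ext i
  simp [mem_codeSupport, LinearMap.funLeft_apply, Equiv.symm_apply_eq]

end Submodule

end Support

lemma card_le_of_spaced {n d : ℕ} (S : Finset (Fin n))
    (hS : ∀ i ∈ S, ∀ j ∈ S, i < j → (i : ℕ) + d < j) : S.card ≤ n / (d + 1) + 1 := by
  have hdiv : ∀ i ∈ S, ∀ j ∈ S, i < j → (i : ℕ) / (d + 1) < (j : ℕ) / (d + 1) :=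
    fun i hi j hj hij => calc
      (i : ℕ) / (d + 1) < (i : ℕ) / (d + 1) + 1 := Nat.lt_succ_self _
      _ = ((i : ℕ) + (d + 1)) / (d + 1) := (Nat.add_div_right _ d.succ_pos).symm
      _ ≤ (j : ℕ) / (d + 1) := Nat.div_le_div_right (hS i hi j hj hij)
  calc S.card ≤ (range (n / (d + 1) + 1)).card := by
        refine card_le_card_of_injOn (fun i => (i : ℕ) / (d + 1))
          (fun i _ => mem_range.2 (Nat.lt_succ_of_le (Nat.div_le_div_right i.isLt.le)))
          fun i hi j hj hij => ?_
        by_contra hne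
        rcases lt_or_gt_of_ne hne with h | h
        · exact (hdiv i hi j hj h).ne hij
        · exact (hdiv j hj i hi h).ne hij.symm
    _ = n / (d + 1) + 1 := card_range _

lemma codeSupport_spaced_of_RLL {n d : ℕ} {D : Submodule (ZMod 2) (Fin n → ZMod 2)}
    (hD : ∀ c ∈ D, RLL d c) {i j : Fin n} (hi : i ∈ D.codeSupport) (hj : j ∈ D.codeSupport)
    (hij : i < j) : (i : ℕ) + d < j := by
  by_contra hji
  obtain ⟨c, hc, hci⟩ := Submodule.mem_codeSupport.1 hi
  obtain ⟨c', hc', hc'j⟩ := Submodule.mem_codeSupport.1 hj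
  have hci : c i = 1 := (by decide : ∀ x : ZMod 2, x ≠ 0 → x = 1) _ hci
  have hcj : c j = 0 := hD c hc i j hci hij (not_lt.1 hji)
  -- `w` equals `c'` at `j` but is `1` at `i`, so the constraint on `w` forces `c' j = 0`.
  let w := c' + (c' i + 1) • c
  have hw : w ∈ D := D.add_mem hc' (D.smul_mem _ hc)
  have hwi : w i = 1 := by
    simp only [w, Pi.add_apply, Pi.smul_apply, smul_eq_mul, hci, mul_one]
    exact (by decide : ∀ x : ZMod 2, x + (x + 1) = 1) _
  have hwj : w j = c' j := by simp [w, hcj]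
  exact hc'j (hwj ▸ hD w hw i j hwi hij (not_lt.1 hji))

lemma card_codeSupport_le_of_RLL {n d : ℕ} {D : Submodule (ZMod 2) (Fin n → ZMod 2)}
    (hD : ∀ c ∈ D, RLL d c) : D.codeSupport.card ≤ n / (d + 1) + 1 :=
  card_le_of_spaced _ fun _ hi _ hj hij => codeSupport_spaced_of_RLL hD hi hj hij

lemma two_pow_mul_finrank_le_of_RLL {m r d : ℕ} (π : Equiv.Perm (Fin (2 ^ m)))
    {D : Submodule (ZMod 2) (Fin (2 ^ m) → ZMod 2)} (hDRM : D ≤ RM m r)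
    (hD : ∀ c ∈ D, RLL d fun j => c (π j)) :
    2 ^ m * finrank (ZMod 2) D ≤ (2 ^ m / (d + 1) + 1) * ∑ i ∈ range (r + 1), m.choose i := by
  set P := D.codeSupport
  have hP : P.card ≤ 2 ^ m / (d + 1) + 1 := by
    have := card_codeSupport_le_of_RLL (D := D.map (LinearMap.funLeft _ _ π)) (d := d)
      (by rintro _ ⟨c, hc, rfl⟩; exact hD c hc)
    rwa [Submodule.codeSupport_map_funLeft, card_image_of_injective _ π.symm.injective] at this
  have hshort := (RM m r).card_mul_finrank_shortened_le (RM_transitive m r) Pᶜ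
  rw [compl_compl, Fintype.card_fin] at hshort
  calc 2 ^ m * finrank (ZMod 2) D ≤ 2 ^ m * finrank (ZMod 2) ((RM m r).shortened Pᶜ) :=
        Nat.mul_le_mul_left _ <|
          Submodule.finrank_mono (Submodule.le_shortened_compl_codeSupport hDRM)
    _ ≤ P.card * finrank (ZMod 2) (RM m r) := hshort
    _ ≤ _ := Nat.mul_le_mul hP (finrank_RM_le m r)

lemma sSup_finrank_RLL_div_le (m r d : ℕ) (π : Equiv.Perm (Fin (2 ^ m))) :
    ((sSup {k : ℕ | ∃ D : Submodule (ZMod 2) (Fin (2 ^ m) → ZMod 2),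
        D ≤ RM m r ∧ (∀ c ∈ D, RLL d (fun j : Fin (2 ^ m) => c (π j))) ∧
        finrank (ZMod 2) D = k} : ℕ) : ℝ) / 2 ^ m ≤
      (∑ i ∈ range (r + 1), (m.choose i : ℝ)) / 2 ^ m * (1 / (d + 1) + 1 / 2 ^ m) := by
  set S := ∑ i ∈ range (r + 1), m.choose i
  have hdiv : ((2 ^ m / (d + 1) : ℕ) : ℝ) ≤ 2 ^ m / (d + 1) := by
    simpa using Nat.cast_div_le (α := ℝ) (m := 2 ^ m) (n := d + 1)
  calc _ ≤ (((2 ^ m / (d + 1) + 1) * S / 2 ^ m : ℕ) : ℝ) / 2 ^ m := by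
        gcongr
        exact csSup_le' fun _ ⟨_, hDRM, hD, hk⟩ => hk ▸ (Nat.le_div_iff_mul_le (by positivity)).2
          (by rw [mul_comm]; exact two_pow_mul_finrank_le_of_RLL π hDRM hD)
    _ ≤ (((2 ^ m / (d + 1) + 1) * S : ℕ) : ℝ) / 2 ^ m / 2 ^ m := by
        gcongr; simpa using Nat.cast_div_le (α := ℝ) (m := (2 ^ m / (d + 1) + 1) * S) (n := 2 ^ m)
    _ ≤ (2 ^ m / (d + 1) + 1) * S / 2 ^ m / 2 ^ m := by push_cast; gcongr
    _ = _ := by simp only [S]; push_cast; field_simp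

lemma limsup_le_of_le_of_tendsto {f u : ℕ → ℝ} {a : ℝ} (hf : ∀ n, 0 ≤ f n)
    (hfu : ∀ n, f n ≤ u n) (hu : Filter.Tendsto u Filter.atTop (nhds a)) :
    Filter.limsup f Filter.atTop ≤ a :=
  hu.limsup_eq ▸ Filter.limsup_le_limsup (Filter.Eventually.of_forall hfu)
    (Filter.isCoboundedUnder_le_of_le _ hf) hu.isBoundedUnder_le

theorem stmt5_general (R : ℝ) (d : ℕ) (r : ℕ → ℕ)
    (hlim : Filter.Tendsto
      (fun m : ℕ => (∑ i ∈ Finset.range (r m + 1), (m.choose i : ℝ)) / 2 ^ m)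
      Filter.atTop (nhds R))
    (π : (m : ℕ) → Equiv.Perm (Fin (2 ^ m))) :
    Filter.limsup
      (fun m : ℕ =>
        ((sSup {k : ℕ | ∃ D : Submodule (ZMod 2) (Fin (2 ^ m) → ZMod 2),
            D ≤ RM m (r m) ∧ (∀ c ∈ D, RLL d (fun j : Fin (2 ^ m) => c (π m j))) ∧
            Module.finrank (ZMod 2) D = k} : ℕ) : ℝ) / 2 ^ m)
      Filter.atTop ≤ R / (d + 1) := by
  have hpow : Filter.Tendsto (fun m : ℕ => (1 : ℝ) / 2 ^ m) Filter.atTop (nhds 0) := by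
    simpa using tendsto_pow_atTop_nhds_zero_of_lt_one (by norm_num : (0 : ℝ) ≤ 1 / 2)
      (by norm_num : (1 : ℝ) / 2 < 1)
  refine limsup_le_of_le_of_tendsto (fun m => by positivity)
    (fun m => sSup_finrank_RLL_div_le m (r m) d (π m)) ?_
  simpa [div_eq_mul_inv] using hlim.mul (tendsto_const_nhds.add hpow)

/-- If C(m,≤r_m)/2^m → R ∈ (0,1), (π_m) is a sequence of Gray permutations,
and L_m is the maximum dimension of a linear subspace D of RM(m,r_m) such that every
codeword of D, reordered by π_m, satisfies the (d,∞)-RLL constraint,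
then limsup L_m/2^m ≤ R/(d+1). -/
theorem stmt5 (R : ℝ) (hR : R ∈ Set.Ioo (0 : ℝ) 1) (d : ℕ) (hd : 1 ≤ d) (r : ℕ → ℕ)
    (hlim : Filter.Tendsto
      (fun m : ℕ => (∑ i ∈ Finset.range (r m + 1), (m.choose i : ℝ)) / 2 ^ m)
      Filter.atTop (nhds R))
    (π : (m : ℕ) → Equiv.Perm (Fin (2 ^ m))) (hπ : ∀ m : ℕ, 1 ≤ m → IsGray m (π m)) :
    Filter.limsup
      (fun m : ℕ =>
        ((sSup {k : ℕ | ∃ D : Submodule (ZMod 2) (Fin (2 ^ m) → ZMod 2),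
            D ≤ RM m (r m) ∧ (∀ c ∈ D, RLL d (fun j : Fin (2 ^ m) => c (π m j))) ∧
            Module.finrank (ZMod 2) D = k} : ℕ) : ℝ) / 2 ^ m)
      Filter.atTop ≤ R / (d + 1) :=
  stmt5_general R d r hlim π
end

section
/- Let C ⊆ F₂^N be an F₂-linear code of dimension K, and let I ⊆ {0,…,N−1} be an information set of C. Suppose I contains t pairwise disjoint (d+1)-tuples of consecutive coordinates {i_1, i_1+1, …, i_1+d}, {i_2, i_2+1, …, i_2+d}, …, {i_t, i_t+1, …, i_t+d}, with i_1 ≥ 0, i_j > i_{j−1} + d for all j ∈ {2,…,t}, and i_t ≤ N−1−d. Then every F₂-linear subcode of C all of whose codewords satisfy the (d,∞)-RLL constraint has dimension at most K − d·t. -/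
/-!
Restriction to the information set `I` embeds the subcode `D` into `F₂^I`. On each window of
`d + 1` consecutive coordinates an RLL word has at most one nonzero entry, so it vanishes there as
soon as the sum of its entries over the window does. Hence `D` still embeds linearly when each of
the `t` windows is compressed to the single sum of its entries, and the target of this embedding
has dimension `|I| - t (d + 1) + t = K - d t`.
-/

open Finset Function Module

theorem Finset.eq_zero_of_sum_eq_zero_of_card_filter_ne_zero_le_one {ι M : Type*}
    [AddCommMonoid M] [DecidableEq M] {B : Finset ι} {v : ι → M} (hv : #{i ∈ B | v i ≠ 0} ≤ 1)
    (hsum : ∑ i ∈ B, v i = 0) : ∀ i ∈ B, v i = 0 := by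
  intro i hi
  by_contra hvi
  refine hvi (hsum ▸ (sum_eq_single_of_mem i hi fun j hj hji => ?_).symm)
  by_contra hvj
  exact hji (card_le_one.1 hv j (by simp [hj, hvj]) i (by simp [hi, hvi]))

theorem Submodule.finrank_add_sum_card_le_of_card_filter_ne_zero_le_one {F ι κ : Type*}
    [Field F] [DecidableEq F] [DecidableEq ι] [Fintype κ] (D : Submodule F (ι → F)) (s : Finset ι) (hD : ∀ v ∈ D, (∀ i ∈ s, v i = 0) → v = 0)
    (B : κ → Finset ι) (hBs : ∀ k, B k ⊆ s) (hB : Pairwise (Disjoint on B))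
    (hweight : ∀ v ∈ D, ∀ k, #{i ∈ B k | v i ≠ 0} ≤ 1) :
    finrank F D + ∑ k, #(B k) ≤ #s + Fintype.card κ := by
  set U := univ.biUnion B
  let f : D →ₗ[F] (↥(s \ U) → F) × (κ → F) :=
    (LinearMap.prod (LinearMap.pi fun i => LinearMap.proj (i : ι))
      (LinearMap.pi fun k => ∑ i ∈ B k, LinearMap.proj i)) ∘ₗ D.subtype
  have hf : Function.Injective f := by
    rw [← LinearMap.ker_eq_bot, LinearMap.ker_eq_bot']
    rintro ⟨v, hv⟩ hfv
    simp only [f, LinearMap.comp_apply, Submodule.subtype_apply, LinearMap.prod_apply,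
      Function.prod_apply, Prod.mk_eq_zero, funext_iff, LinearMap.pi_apply, LinearMap.proj_apply,
      Pi.ofNat_apply, Subtype.forall, mem_sdiff, and_imp, LinearMap.coe_sum, LinearMap.coe_proj,
      Finset.sum_apply, eval] at hfv
    obtain ⟨hout, hsums⟩ := hfv
    refine Subtype.ext (hD v hv fun i hi => ?_)
    by_cases hiU : i ∈ U
    · obtain ⟨k, -, hik⟩ := mem_biUnion.1 hiU
      exact eq_zero_of_sum_eq_zero_of_card_filter_ne_zero_le_one (hweight v hv k) (hsums k) i hik
    · exact hout i hi hiU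
  have hU : #(s \ U) + ∑ k, #(B k) = #s := by
    rw [← card_biUnion fun k _ l _ hkl => hB hkl]
    exact card_sdiff_add_card_eq_card (biUnion_subset.2 fun k _ => hBs k)
  have := LinearMap.finrank_le_finrank_of_injective hf
  rw [finrank_prod, finrank_pi, finrank_pi, Fintype.card_coe] at this
  omega

theorem RLL.eq_of_ne_zero {d n : ℕ} {w : Fin n → ZMod 2} (hw : RLL d w) {i j : Fin n}
    (hi : w i ≠ 0) (hj : w j ≠ 0) (hij : (i : ℕ) ≤ j + d) (hji : (j : ℕ) ≤ i + d) : i = j := by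
  rcases lt_trichotomy i j with hlt | heq | hgt
  · exact absurd (hw i j (Fin.eq_one_of_ne_zero _ hi) hlt hji) hj
  · exact heq
  · exact absurd (hw j i (Fin.eq_one_of_ne_zero _ hj) hgt hij) hi

theorem RLL.card_filter_ne_zero_Icc_le_one {d n : ℕ} {w : Fin n → ZMod 2} (hw : RLL d w)
    {a b : Fin n} (hab : (b : ℕ) ≤ a + d) : #{i ∈ Icc a b | w i ≠ 0} ≤ 1 := by
  refine card_le_one.2 fun i hi j hj => ?_
  simp only [mem_filter, mem_Icc, Fin.le_def] at hi hj
  exact hw.eq_of_ne_zero hi.2 hj.2 (by omega) (by omega)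

theorem stmt7_general (N K d t : ℕ) (hd : 1 ≤ d)
    (C : Submodule (ZMod 2) (Fin N → ZMod 2))
    (I : Finset (Fin N)) (hIcard : I.card = K)
    (hinfo : Function.Bijective
      (fun c : C => fun i : {i : Fin N // i ∈ I} => (c : Fin N → ZMod 2) i.val))
    (idx : Fin t → ℕ)
    (hgap : ∀ j k : Fin t, j < k → idx j + d < idx k)
    (hlast : ∀ j : Fin t, idx j + d ≤ N - 1)
    (hmem : ∀ j : Fin t, ∀ k : ℕ, k ≤ d → ∀ h : idx j + k < N, (⟨idx j + k, h⟩ : Fin N) ∈ I)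
    (D : Submodule (ZMod 2) (Fin N → ZMod 2)) (hDC : D ≤ C)
    (hRLL : ∀ c ∈ D, RLL d c) :
    (Module.finrank (ZMod 2) D : ℤ) ≤ (K : ℤ) - d * t := by
  have hlt : ∀ j k, k ≤ d → idx j + k < N := fun j k hk => by have := hlast j; omega
  let block (j : Fin t) : Finset (Fin N) :=
    Icc ⟨idx j, hlt j 0 (Nat.zero_le d)⟩ ⟨idx j + d, hlt j d le_rfl⟩
  have hD : ∀ v ∈ D, (∀ i ∈ I, v i = 0) → v = 0 := fun v hv hvI =>
    congrArg Subtype.val (hinfo.1 (a₁ := ⟨v, hDC hv⟩) (a₂ := 0) (funext fun i => hvI i i.2))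
  have hblockI : ∀ j, block j ⊆ I := fun j i hi => by
    simp only [block, mem_Icc, Fin.le_def] at hi
    convert hmem j (i - idx j) (by omega) (by omega)
    omega
  have hdisj : Pairwise (Disjoint on block) := by
    refine (pairwise_disjoint_on block).2 fun j k hjk => disjoint_left.2 fun i hij hik => ?_
    have := hgap j k hjk
    simp only [block, mem_Icc, Fin.le_def] at hij hik
    omega
  have hcard : ∑ j, #(block j) = t * (d + 1) := by simp [block, Fin.card_Icc, add_assoc]
  have := D.finrank_add_sum_card_le_of_card_filter_ne_zero_le_one I hD block hblockI hdisj
    fun v hv j => (hRLL v hv).card_filter_ne_zero_Icc_le_one (by simp)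
  rw [hcard, hIcard, Fintype.card_fin] at this
  push_cast [Nat.mul_succ] at this ⊢
  linarith

/-- Let C ⊆ F₂^N be a linear code of dimension K with information set I
(a set of K coordinates on which the restriction map is a bijection). If I contains t
pairwise disjoint (d+1)-tuples of consecutive coordinates, then every linear subcode of C
all of whose codewords satisfy the (d,∞)-RLL constraint has dimension at most K − d·t. -/
theorem stmt7 (N K d t : ℕ) (hd : 1 ≤ d)
    (C : Submodule (ZMod 2) (Fin N → ZMod 2))
    (hK : Module.finrank (ZMod 2) C = K)
    (I : Finset (Fin N)) (hIcard : I.card = K)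
    (hinfo : Function.Bijective
      (fun c : C => fun i : {i : Fin N // i ∈ I} => (c : Fin N → ZMod 2) i.val))
    (idx : Fin t → ℕ)
    (hgap : ∀ j k : Fin t, j < k → idx j + d < idx k)
    (hlast : ∀ j : Fin t, idx j + d ≤ N - 1)
    (hmem : ∀ j : Fin t, ∀ k : ℕ, k ≤ d → ∀ h : idx j + k < N, (⟨idx j + k, h⟩ : Fin N) ∈ I)
    (D : Submodule (ZMod 2) (Fin N → ZMod 2)) (hDC : D ≤ C)
    (hRLL : ∀ c ∈ D, RLL d c) :
    (Module.finrank (ZMod 2) D : ℤ) ≤ (K : ℤ) - d * t :=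
  stmt7_general N K d t hd C I hIcard hinfo idx hgap hlast hmem D hDC hRLL
end

section
/- Let m ≥ 1 and 0 ≤ r ≤ m−1 be integers. Then the number of integers s with 0 ≤ s ≤ 2^m − 2 such that wt_m(s) ≤ r and wt_m(s+1) ≥ r+1 equals the binomial coefficient C(m−1, r). -/
/-- Number of 1s in the m-bit binary representation of s. -/
def wtN (m s : ℕ) : ℕ := ((Finset.range m).filter fun j => s.testBit j).card

/-! Adding 1 to `s` clears its trailing ones and sets one bit, so `wt(s+1) ≤ wt(s)` for odd `s`
and `wt(s+1) = wt(s) + 1` for even `s`. Hence the weight crosses the level `r` exactly at the even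
`s = 2t` with `wt_m(s) = wt_{m-1}(t) = r`, and such `t < 2^(m-1)` correspond, through their sets
of bit indices, to the `r`-subsets of `{0, …, m-2}`. -/

open Finset

lemma wtN_succ (n s : ℕ) : wtN (n + 1) s = wtN n (s / 2) + s % 2 := by
  simp only [wtN, card_filter, sum_range_succ', Nat.testBit_succ, Nat.testBit_zero]
  rcases Nat.mod_two_eq_zero_or_one s with h | h <;> simp [h]

lemma wtN_two_mul (n t : ℕ) : wtN (n + 1) (2 * t) = wtN n t := by
  simp [wtN_succ]

lemma wtN_add_one_le (m s : ℕ) : wtN m (s + 1) ≤ wtN m s + 1 := by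
  induction m generalizing s with
  | zero => simp [wtN]
  | succ n ih =>
    rw [wtN_succ, wtN_succ]
    rcases Nat.mod_two_eq_zero_or_one s with h | h
    · rw [show (s + 1) / 2 = s / 2 by omega]
      omega
    · have := ih (s / 2)
      rw [show (s + 1) / 2 = s / 2 + 1 by omega]
      omega

lemma wtN_add_one_of_mod_two_eq_zero {n s : ℕ} (hs : s % 2 = 0) :
    wtN (n + 1) (s + 1) = wtN (n + 1) s + 1 := by
  rw [wtN_succ, wtN_succ, show (s + 1) / 2 = s / 2 by omega]
  omega

lemma wtN_add_one_le_of_mod_two_eq_one {n s : ℕ} (hs : s % 2 = 1) :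
    wtN (n + 1) (s + 1) ≤ wtN (n + 1) s := by
  have := wtN_add_one_le n (s / 2)
  rw [wtN_succ, wtN_succ, show (s + 1) / 2 = s / 2 + 1 by omega]
  omega

lemma wtN_le_and_le_wtN_add_one_iff {n r s : ℕ} :
    wtN (n + 1) s ≤ r ∧ r + 1 ≤ wtN (n + 1) (s + 1) ↔ s % 2 = 0 ∧ wtN (n + 1) s = r := by
  rcases Nat.mod_two_eq_zero_or_one s with h | h
  · rw [wtN_add_one_of_mod_two_eq_zero h]
    omega
  · have := wtN_add_one_le_of_mod_two_eq_one (n := n) h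
    omega

lemma filter_testBit_eq_toFinset_bitIndices {n t : ℕ} (ht : t < 2 ^ n) :
    (range n).filter (t.testBit ·) = t.bitIndices.toFinset := by
  ext i
  simp only [mem_filter, mem_range, List.mem_toFinset, Nat.mem_bitIndices, and_iff_right_iff_imp]
  intro hi
  exact (Nat.pow_lt_pow_iff_right (by norm_num)).1 ((Nat.ge_two_pow_of_testBit hi).trans_lt ht)

lemma wtN_eq_card_bitIndices {n t : ℕ} (ht : t < 2 ^ n) :
    wtN n t = t.bitIndices.toFinset.card := by
  rw [wtN, filter_testBit_eq_toFinset_bitIndices ht]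

lemma toFinset_bitIndices_subset_range {n t : ℕ} (ht : t < 2 ^ n) :
    t.bitIndices.toFinset ⊆ range n := by
  rw [← filter_testBit_eq_toFinset_bitIndices ht]
  exact filter_subset _ _

open Finset.Nat in
lemma card_filter_wtN_eq (n r : ℕ) :
    ((range (2 ^ n)).filter (wtN n · = r)).card = n.choose r := by
  conv_rhs => rw [← card_range n, ← card_powersetCard]
  refine card_nbij' equivBitIndices equivBitIndices.symm ?_ ?_
    (fun t _ ↦ equivBitIndices.symm_apply_apply t) (fun s _ ↦ equivBitIndices.apply_symm_apply s)
  · intro t ht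
    simp only [coe_filter, mem_range] at ht
    simp only [mem_coe, mem_powersetCard, equivBitIndices_apply]
    exact ⟨toFinset_bitIndices_subset_range ht.1, ht.2 ▸ (wtN_eq_card_bitIndices ht.1).symm⟩
  · intro s hs
    simp only [mem_coe, mem_powersetCard] at hs
    have hlt : ∑ i ∈ s, 2 ^ i < 2 ^ n :=
      Nat.geomSum_lt le_rfl fun k hk ↦ mem_range.1 (hs.1 hk)
    simp only [coe_filter, mem_range, equivBitIndices_symm_apply]
    exact ⟨hlt, by rw [wtN_eq_card_bitIndices hlt, toFinset_bitIndices_sum_two_pow, hs.2]⟩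

theorem stmt10_general (m r : ℕ) (hm : 1 ≤ m) :
    {s : ℕ | s ≤ 2 ^ m - 2 ∧ wtN m s ≤ r ∧ r + 1 ≤ wtN m (s + 1)}.ncard =
      (m - 1).choose r := by
  obtain ⟨n, rfl⟩ : ∃ n, m = n + 1 := ⟨m - 1, by omega⟩
  have hpow : 1 ≤ 2 ^ n := Nat.one_le_two_pow
  have hset : {s : ℕ | s ≤ 2 ^ (n + 1) - 2 ∧ wtN (n + 1) s ≤ r ∧ r + 1 ≤ wtN (n + 1) (s + 1)} =
      (2 * ·) '' ((range (2 ^ n)).filter (wtN n · = r) : Set ℕ) := by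
    ext s
    simp only [wtN_le_and_le_wtN_add_one_iff, coe_filter, mem_range, Set.mem_image,
      Set.mem_ofPred_eq, pow_succ]
    constructor
    · rintro ⟨hs, heven, rfl⟩
      obtain ⟨t, rfl⟩ : ∃ t, s = 2 * t := ⟨s / 2, by omega⟩
      exact ⟨t, ⟨by omega, (wtN_two_mul n t).symm⟩, rfl⟩
    · rintro ⟨t, ⟨ht, rfl⟩, rfl⟩
      exact ⟨by omega, by omega, wtN_two_mul n t⟩
  rw [hset, Set.ncard_image_of_injective _ (mul_right_injective₀ two_ne_zero),
    Set.ncard_coe_finset, card_filter_wtN_eq, Nat.add_sub_cancel]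

/-- For 1 ≤ m and 0 ≤ r ≤ m−1, the number of integers s ∈ [0, 2^m − 2] with
wt_m(s) ≤ r and wt_m(s+1) ≥ r+1 equals C(m−1, r). -/
theorem stmt10 (m r : ℕ) (hm : 1 ≤ m) (hr : r ≤ m - 1) :
    {s : ℕ | s ≤ 2 ^ m - 2 ∧ wtN m s ≤ r ∧ r + 1 ≤ wtN m (s + 1)}.ncard =
      (m - 1).choose r :=
  stmt10_general m r hm
end

section
/- Let m ≥ 1 and 0 ≤ r ≤ m−1 be integers, and let π be a Gray permutation of {0,…,2^m−1}. Then the number of integers s with 0 ≤ s ≤ 2^m − 1 such that wt_m(π(s)) ≤ r and either s = 2^m − 1 or wt_m(π(s+1)) ≥ r+1, is at most C(m, r+1) + 1, where C(m, r+1) is the binomial coefficient. -/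
/-!
Only the last index and the up-crossings `s` (with `wt π(s) ≤ r < wt π(s+1)`) are counted.
A Gray step changes the weight by at most one, so at an up-crossing `π(s+1)` has weight exactly
`r + 1`; since `s ↦ π(s+1)` is injective, there are at most `C(m, r+1)` up-crossings.
-/

open Finset

lemma wtN_le_wtN_add_card_testBit_ne (m a b : ℕ) :
    wtN m b ≤ wtN m a + ((range m).filter fun i => a.testBit i ≠ b.testBit i).card := by
  classical
  have hsub : (range m).filter (fun j => b.testBit j) ⊆
      (range m).filter (fun j => a.testBit j) ∪
        (range m).filter (fun i => a.testBit i ≠ b.testBit i) := by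
    intro j
    simp only [mem_filter, mem_union]
    by_cases hab : a.testBit j = b.testBit j <;> simp_all
  exact (card_le_card hsub).trans (card_union_le _ _)

lemma IsGray.wtN_succ_le {m : ℕ} {π : Equiv.Perm (Fin (2 ^ m))} (hπ : IsGray m π)
    (s : Fin (2 ^ m)) (h : (s : ℕ) + 1 < 2 ^ m) :
    wtN m (π ⟨s + 1, h⟩) ≤ wtN m (π s) + 1 :=
  (wtN_le_wtN_add_card_testBit_ne m _ _).trans_eq (by rw [hπ s h])

lemma eq_of_filter_testBit_eq {m x y : ℕ} (hx : x < 2 ^ m) (hy : y < 2 ^ m)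
    (h : (range m).filter (fun j => x.testBit j) = (range m).filter (fun j => y.testBit j)) :
    x = y := by
  refine Nat.eq_of_testBit_eq fun j => ?_
  by_cases hj : j < m
  · simpa [hj] using congrArg (j ∈ ·) h
  · have hm : 2 ^ m ≤ 2 ^ j := Nat.pow_le_pow_right two_pos (by omega)
    rw [Nat.testBit_lt_two_pow (hx.trans_le hm), Nat.testBit_lt_two_pow (hy.trans_le hm)]

lemma ncard_wtN_eq_le_choose (m k : ℕ) :
    {x : Fin (2 ^ m) | wtN m x = k}.ncard ≤ m.choose k := by
  have hchoose : m.choose k = (↑((range m).powersetCard k) : Set (Finset ℕ)).ncard := by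
    rw [Set.ncard_coe_finset, card_powersetCard, card_range]
  rw [hchoose]
  refine Set.ncard_le_ncard_of_injOn (fun x => (range m).filter fun j => (x : ℕ).testBit j)
    (fun x hx => ?_) (fun x _ y _ hxy => Fin.ext (eq_of_filter_testBit_eq x.2 y.2 hxy))
  simpa [mem_powersetCard, wtN] using hx

theorem stmt12_general (m r : ℕ)
    (π : Equiv.Perm (Fin (2 ^ m))) (hπ : IsGray m π) :
    {s : Fin (2 ^ m) | wtN m ((π s : Fin (2 ^ m)) : ℕ) ≤ r ∧
        ((s : ℕ) + 1 = 2 ^ m ∨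
          ∃ h : (s : ℕ) + 1 < 2 ^ m,
            r + 1 ≤ wtN m ((π (⟨(s : ℕ) + 1, h⟩ : Fin (2 ^ m)) : Fin (2 ^ m)) : ℕ))}.ncard ≤
      m.choose (r + 1) + 1 := by
  set last : Fin (2 ^ m) := ⟨2 ^ m - 1, Nat.sub_lt (Nat.two_pow_pos m) one_pos⟩
  refine (Set.ncard_le_ncard_sdiff_add_ncard _ {last}).trans ?_
  rw [Set.ncard_singleton]
  refine Nat.add_le_add_right (le_trans ?_ (ncard_wtN_eq_le_choose m (r + 1))) 1
  -- `s + 1` is addition in `Fin (2 ^ m)`; it wraps around only at `last`, which was removed.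
  refine Set.ncard_le_ncard_of_injOn (fun s => π (s + 1)) ?_
    (π.injective.comp (add_left_injective 1)).injOn
  rintro s ⟨⟨hle, hend | ⟨h, hge⟩⟩, hne⟩
  · exact absurd (Fin.ext (by simp [last]; omega)) hne
  · have hsucc : s + 1 = ⟨s + 1, h⟩ := Fin.ext (Fin.val_add_one_of_lt' h)
    have hstep := hπ.wtN_succ_le s h
    simp only [Set.mem_ofPred_eq, hsucc]
    omega

/-- For a Gray permutation π of {0,…,2^m−1} and 0 ≤ r ≤ m−1, the number of
s with wt_m(π(s)) ≤ r and (s = 2^m − 1 or wt_m(π(s+1)) ≥ r+1) is at most C(m, r+1) + 1. -/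
theorem stmt12 (m r : ℕ) (hm : 1 ≤ m) (hr : r ≤ m - 1)
    (π : Equiv.Perm (Fin (2 ^ m))) (hπ : IsGray m π) :
    {s : Fin (2 ^ m) | wtN m ((π s : Fin (2 ^ m)) : ℕ) ≤ r ∧
        ((s : ℕ) + 1 = 2 ^ m ∨
          ∃ h : (s : ℕ) + 1 < 2 ^ m,
            r + 1 ≤ wtN m ((π (⟨(s : ℕ) + 1, h⟩ : Fin (2 ^ m)) : Fin (2 ^ m)) : ℕ))}.ncard ≤
      m.choose (r + 1) + 1 :=
  stmt12_general m r π hπ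
end

section
/- Fix R ∈ (0,1) and let r_m be the canonical radius sequence determined by R. Then for every fixed integer j ≥ 0, lim_{m→∞} C(m−j, ≤ r_m)/2^{m−j} = R, where C(m−j, ≤ r_m) := Σ_{i=0}^{r_m} C(m−j, i) and C(a,b) is the binomial coefficient (taken over m > j). -/
/-!
Read `Σ_{i ≤ k} C(n, i) / 2ⁿ` as the probability that `n` fair `±1` coin flips sum to at most
`2k - n`. By the central limit theorem (and the portmanteau theorem, the Gaussian having no atoms)
these probabilities, as functions of the normalised threshold `(2k - n)/√n`, converge pointwise to
the standard Gaussian cdf `Φ`; being monotone, they also converge along any threshold sequence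
tending to `q`, with limit `Φ(q)`. The canonical radius `r_m` has normalised threshold
`(2 r_m - (m - j))/√(m - j) → q`, and `Φ(q) = R` is the defining property of `q`.
-/

open MeasureTheory ProbabilityTheory Filter Finset Topology Real

lemma tendsto_apply_of_monotone_of_continuousAt {ι : Type*} {l : Filter ι} {F : ι → ℝ → ℝ}
    {G : ℝ → ℝ} {x : ι → ℝ} {q : ℝ} (hF : ∀ i, Monotone (F i))
    (hlim : ∀ y, Tendsto (fun i ↦ F i y) l (𝓝 (G y))) (hG : ContinuousAt G q)
    (hx : Tendsto x l (𝓝 q)) : Tendsto (fun i ↦ F i (x i)) l (𝓝 (G q)) := by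
  refine tendsto_order.2 ⟨fun a ha ↦ ?_, fun b hb ↦ ?_⟩
  · obtain ⟨y, hyq, hay⟩ := (hG.eventually (lt_mem_nhds ha)).exists_lt
    filter_upwards [(hlim y).eventually (lt_mem_nhds hay), hx.eventually (lt_mem_nhds hyq)]
      with i hi hxi
    exact hi.trans_le (hF i hxi.le)
  · obtain ⟨y, hqy, hyb⟩ := (hG.eventually (gt_mem_nhds hb)).exists_gt
    filter_upwards [(hlim y).eventually (gt_mem_nhds hyb), hx.eventually (gt_mem_nhds hqy)]
      with i hi hxi
    exact (hF i hxi.le).trans_lt hi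

lemma continuousAt_cdf {μ : Measure ℝ} [IsProbabilityMeasure μ] {x : ℝ} (hx : μ {x} = 0) :
    ContinuousAt (cdf μ) x := by
  rw [(cdf μ).mono.continuousAt_iff_leftLim_eq_rightLim, (cdf μ).rightLim_eq]
  have := (cdf μ).measure_singleton x
  rw [measure_cdf, hx, eq_comm, ENNReal.ofReal_eq_zero, sub_nonpos] at this
  exact le_antisymm ((cdf μ).mono.leftLim_le le_rfl) this

lemma MeasureTheory.TendstoInDistribution.tendsto_measureReal_le {ι Ω Ω' : Type*} {l : Filter ι}
    {mΩ : MeasurableSpace Ω} {mΩ' : MeasurableSpace Ω'} {μ : Measure Ω} [IsProbabilityMeasure μ]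
    {μ' : Measure Ω'} [IsProbabilityMeasure μ'] {X : ι → Ω → ℝ} {Z : Ω' → ℝ}
    (h : TendstoInDistribution X l Z (fun _ ↦ μ) μ') {x : ℝ} (hx : μ'.map Z {x} = 0) :
    Tendsto (fun i ↦ μ.real {ω | X i ω ≤ x}) l (𝓝 (cdf (μ'.map Z) x)) := by
  have := Measure.isProbabilityMeasure_map (μ := μ') h.aemeasurable_limit
  have hlim := ProbabilityMeasure.tendsto_measure_of_null_frontier_of_tendsto h.tendsto
    (E := Set.Iic x) (by simp [hx])
  rw [cdf_eq_real]
  refine (NNReal.tendsto_coe.2 hlim).congr fun i ↦ ?_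
  change (μ.map (X i)).real (Set.Iic x) = _
  rw [measureReal_def, Measure.map_apply₀ (h.forall_aemeasurable i)
    measurableSet_Iic.nullMeasurableSet]
  rfl

lemma cdf_gaussianReal (x : ℝ) :
    cdf (gaussianReal 0 1) x = 1 - 1 / √(2 * π) * ∫ τ in Set.Ioi x, exp (-τ ^ 2 / 2) := by
  rw [cdf_eq_real, ← Set.compl_Ioi, probReal_compl_eq_one_sub measurableSet_Ioi, measureReal_def,
    gaussianReal_apply_eq_integral _ one_ne_zero, ENNReal.toReal_ofReal
      (setIntegral_nonneg measurableSet_Ioi fun _ _ ↦ gaussianPDFReal_nonneg _ _ _)]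
  simp [gaussianPDFReal, integral_const_mul]

def spin (b : Bool) : ℝ := if b then 1 else -1

section Counting

variable {ι : Type*} [Fintype ι]

lemma sum_spin (b : ι → Bool) : ∑ j, spin (b j) = 2 * #{j | b j} - Fintype.card ι := by
  simp only [spin, sum_ite, sum_const, nsmul_eq_mul, mul_one, mul_neg]
  rw [← card_univ, ← card_filter_add_card_filter_not (s := univ) (fun j ↦ b j = true)]
  push_cast
  ring

variable [DecidableEq ι]

lemma card_filter_card_eq (i : ℕ) :
    #{b : ι → Bool | #{j | b j} = i} = (Fintype.card ι).choose i := by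
  rw [← card_univ, ← card_powersetCard]
  exact card_bij' (fun b _ ↦ ({j | b j} : Finset ι)) (fun s _ j ↦ decide (j ∈ s)) (by simp)
    (by simp) (fun b _ ↦ by funext j; simp) (fun s _ ↦ by ext j; simp)

lemma card_filter_card_le_s16 (k : ℕ) :
    #{b : ι → Bool | #{j | b j} ≤ k} = ∑ i ∈ range (k + 1), (Fintype.card ι).choose i := by
  rw [card_eq_sum_card_fiberwise (f := fun b ↦ #{j | b j}) (t := range (k + 1))
    (fun b hb ↦ by simpa [Nat.lt_succ_iff] using hb)]
  refine sum_congr rfl fun i hi ↦ ?_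
  rw [← card_filter_card_eq, filter_filter]
  congr 1
  ext b
  simp only [mem_filter, mem_univ, true_and, mem_range] at hi ⊢
  exact ⟨fun h ↦ h.2, fun h ↦ ⟨by omega, h⟩⟩

end Counting

noncomputable def coinFlips : Measure (ℕ → Bool) := Measure.infinitePi fun _ ↦ uniformOn Set.univ

namespace coinFlips

instance : IsProbabilityMeasure coinFlips := by unfold coinFlips; infer_instance

lemma integral_comp_eval (g : Bool → ℝ) (k : ℕ) :
    ∫ ω, g (ω k) ∂coinFlips = (g true + g false) / 2 := by
  rw [← integral_map (measurable_pi_apply k).aemeasurable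
      (measurable_of_finite g).aestronglyMeasurable,
    coinFlips, Measure.infinitePi_map_eval, integral_fintype .of_finite]
  simp only [Fintype.sum_bool, Measure.real, uniformOn_univ, Measure.count_singleton,
    Fintype.card_bool]
  norm_num
  ring

lemma measureReal_restrict (s : Finset ℕ) (p : (s → Bool) → Prop) [DecidablePred p] :
    coinFlips.real {ω | p (s.restrict ω)} = #{b | p b} / 2 ^ #s := by
  have hmap : coinFlips.map s.restrict = uniformOn Set.univ := by
    rw [coinFlips, Measure.infinitePi_map_restrict, ← Set.pi_univ Set.univ, uniformOn_pi]
  change coinFlips.real (s.restrict ⁻¹' {b | p b}) = _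
  rw [← map_measureReal_apply (Finset.measurable_restrict s) (.of_discrete), hmap,
    measureReal_def, uniformOn_univ, Measure.count_apply_finite _ (Set.toFinite _)]
  simp

lemma measureReal_sum_spin_le (n k : ℕ) :
    coinFlips.real {ω | ∑ j ∈ range n, spin (ω j) ≤ 2 * k - n} =
      (∑ i ∈ range (k + 1), (n.choose i : ℝ)) / 2 ^ n := by
  have hset : {ω | ∑ j ∈ range n, spin (ω j) ≤ 2 * k - n} =
      {ω | #{j | (range n).restrict ω j} ≤ k} := by
    ext ω
    have := sum_spin ((range n).restrict ω)
    rw [Fintype.card_coe, card_range] at this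
    rw [Set.mem_ofPred_eq, Set.mem_ofPred_eq, ← sum_coe_sort (range n)]
    change ∑ j, spin ((range n).restrict ω j) ≤ _ ↔ _
    rw [this, sub_le_sub_iff_right, mul_le_mul_iff_right₀ two_pos, Nat.cast_le]
  rw [hset, measureReal_restrict (range n) (fun b ↦ #{j | b j} ≤ k), card_filter_card_le_s16,
    Fintype.card_coe, card_range, Nat.cast_sum]

lemma iIndepFun_spin : iIndepFun (fun k (ω : ℕ → Bool) ↦ spin (ω k)) coinFlips :=
  iIndepFun_infinitePi (X := fun _ ↦ spin) fun _ ↦ measurable_of_finite _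

lemma identDistrib_spin (k : ℕ) :
    IdentDistrib (fun ω : ℕ → Bool ↦ spin (ω k)) (fun ω ↦ spin (ω 0)) coinFlips coinFlips := by
  have hmap (k : ℕ) : coinFlips.map (fun ω ↦ spin (ω k)) = (uniformOn Set.univ).map spin := by
    rw [← Measure.infinitePi_map_eval (fun _ ↦ uniformOn (Set.univ : Set Bool)) k,
      Measure.map_map (measurable_of_finite spin) (measurable_pi_apply k)]
    rfl
  exact ⟨(measurable_of_finite spin).comp (measurable_pi_apply k) |>.aemeasurable,
    (measurable_of_finite spin).comp (measurable_pi_apply 0) |>.aemeasurable,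
    by rw [hmap, hmap]⟩

theorem tendstoInDistribution_sum_spin :
    TendstoInDistribution (fun (n : ℕ) ω ↦ (√n)⁻¹ * ∑ k ∈ range n, spin (ω k)) atTop id
      (fun _ ↦ coinFlips) (gaussianReal 0 1) :=
  tendstoInDistribution_inv_sqrt_mul_sum .id
    (by simpa [spin] using integral_comp_eval spin 0)
    (by simp [spin]) iIndepFun_spin identDistrib_spin

end coinFlips

theorem tendsto_sum_choose_div_two_pow {k : ℕ → ℕ} {q : ℝ}
    (hk : Tendsto (fun n : ℕ ↦ (2 * k n - n : ℝ) / √n) atTop (𝓝 q)) :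
    Tendsto (fun n ↦ (∑ i ∈ range (k n + 1), (n.choose i : ℝ)) / 2 ^ n) atTop
      (𝓝 (cdf (gaussianReal 0 1) q)) := by
  have hatom (x : ℝ) : gaussianReal 0 1 {x} = 0 :=
    have := nullSingletonClass_gaussianReal (μ := 0) one_ne_zero
    measure_singleton x
  have hcdf (x : ℝ) : Tendsto (fun n : ℕ ↦ coinFlips.real
      {ω | (√n)⁻¹ * ∑ k ∈ range n, spin (ω k) ≤ x}) atTop (𝓝 (cdf (gaussianReal 0 1) x)) := by
    simpa using coinFlips.tendstoInDistribution_sum_spin.tendsto_measureReal_le (by simp [hatom])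
  have hmono (n : ℕ) : Monotone fun x ↦ coinFlips.real
      {ω | (√n)⁻¹ * ∑ k ∈ range n, spin (ω k) ≤ x} :=
    fun _ _ hxy ↦ measureReal_mono fun _ hω ↦ le_trans hω hxy
  refine (tendsto_apply_of_monotone_of_continuousAt hmono hcdf
    (continuousAt_cdf (hatom q)) hk).congr' ?_
  filter_upwards [eventually_gt_atTop 0] with n hn
  have hsqrt : 0 < √(n : ℝ) := sqrt_pos.2 (by exact_mod_cast hn)
  simp_rw [inv_mul_le_iff₀ hsqrt, mul_div_cancel₀ _ hsqrt.ne']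
  exact coinFlips.measureReal_sum_spin_le n (k n)

lemma tendsto_const_add_sqrt_add_mul_div_sqrt (c q j : ℝ) :
    Tendsto (fun n : ℕ ↦ (c + √(n + j) * q) / √n) atTop (𝓝 q) := by
  have hsqrt : Tendsto (fun n : ℕ ↦ √n) atTop atTop :=
    tendsto_sqrt_atTop.comp tendsto_natCast_atTop_atTop
  have hratio : Tendsto (fun n : ℕ ↦ √(n + j) / √n) atTop (𝓝 1) := by
    have : Tendsto (fun n : ℕ ↦ √(1 + j / n)) atTop (𝓝 1) := by
      simpa using ((tendsto_const_div_atTop_nhds_zero_nat j).const_add 1).sqrt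
    refine this.congr' ?_
    filter_upwards [eventually_ne_atTop 0] with n hn
    rw [← Real.sqrt_div' _ (Nat.cast_nonneg n), add_div, div_self (by exact_mod_cast hn)]
  have := (tendsto_const_nhds (x := c)).div_atTop hsqrt |>.add (hratio.mul_const q)
  rw [zero_add, one_mul] at this
  refine this.congr fun n ↦ ?_
  ring

lemma tendsto_two_mul_floor_sub_div_sqrt (q : ℝ) (j : ℕ) :
    Tendsto (fun n : ℕ ↦ (2 * ⌊((n + j : ℕ) : ℝ) / 2 + √((n + j : ℕ) : ℝ) / 2 * q⌋₊ - n : ℝ) / √n)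
      atTop (𝓝 q) := by
  have hpos : ∀ᶠ n : ℕ in atTop, 0 ≤ ((n + j : ℕ) : ℝ) / 2 + √((n + j : ℕ) : ℝ) / 2 * q := by
    filter_upwards [(tendsto_sqrt_atTop.comp <| tendsto_natCast_atTop_atTop.comp <|
      tendsto_add_atTop_nat j).eventually_ge_atTop (-q)] with n hn
    simp only [Function.comp_apply] at hn
    have := sq_sqrt (Nat.cast_nonneg (α := ℝ) (n + j))
    nlinarith [sqrt_nonneg ((n + j : ℕ) : ℝ), hn]
  refine tendsto_of_tendsto_of_tendsto_of_le_of_le'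
    (tendsto_const_add_sqrt_add_mul_div_sqrt (j - 2) q j)
    (tendsto_const_add_sqrt_add_mul_div_sqrt j q j) ?_ ?_
  · refine .of_forall fun n ↦ ?_
    gcongr
    have := Nat.lt_floor_add_one (((n + j : ℕ) : ℝ) / 2 + √((n + j : ℕ) : ℝ) / 2 * q)
    push_cast at this ⊢
    linarith
  · filter_upwards [hpos] with n hn
    gcongr
    have := Nat.floor_le hn
    push_cast at this ⊢
    linarith

theorem stmt16_general (R : ℝ)
    (q : ℝ)
    (hq : (1 / Real.sqrt (2 * Real.pi)) * ∫ τ in Set.Ioi q, Real.exp (-τ ^ 2 / 2) = 1 - R)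
    (r : ℕ → ℕ)
    (hr : ∀ m : ℕ, r m = Int.toNat ⌊(m : ℝ) / 2 + Real.sqrt m / 2 * q⌋)
    (j : ℕ) :
    Filter.Tendsto
      (fun m : ℕ => (∑ i ∈ Finset.range (r m + 1), ((m - j).choose i : ℝ)) / 2 ^ (m - j))
      Filter.atTop (nhds R) := by
  have hΦ : cdf (gaussianReal 0 1) q = R := by rw [cdf_gaussianReal, hq]; ring
  have hk : Tendsto (fun n : ℕ ↦ (2 * r (n + j) - n : ℝ) / √n) atTop (𝓝 q) := by
    simpa [hr, Int.floor_toNat] using tendsto_two_mul_floor_sub_div_sqrt q j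
  rw [← hΦ]
  refine ((tendsto_sum_choose_div_two_pow hk).comp (tendsto_sub_atTop_nat j)).congr' ?_
  filter_upwards [eventually_ge_atTop j] with m hm
  simp [Nat.sub_add_cancel hm]

/-- For R ∈ (0,1), with the canonical radius sequence
r_m = max(⌊m/2 + (√m/2)q⌋, 0) where Q(q) = 1−R, for every fixed integer j ≥ 0 one has
lim_{m→∞} C(m−j, ≤ r_m)/2^{m−j} = R. -/
theorem stmt16 (R : ℝ) (hR : R ∈ Set.Ioo (0 : ℝ) 1)
    (q : ℝ)
    (hq : (1 / Real.sqrt (2 * Real.pi)) * ∫ τ in Set.Ioi q, Real.exp (-τ ^ 2 / 2) = 1 - R)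
    (r : ℕ → ℕ)
    (hr : ∀ m : ℕ, r m = Int.toNat ⌊(m : ℝ) / 2 + Real.sqrt m / 2 * q⌋)
    (j : ℕ) :
    Filter.Tendsto
      (fun m : ℕ => (∑ i ∈ Finset.range (r m + 1), ((m - j).choose i : ℝ)) / 2 ^ (m - j))
      Filter.atTop (nhds R) :=
  stmt16_general R q hq r hr j
end
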